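/- Let (X, Y, S, Z) be a random vector on a probability space with X ∈ ℝ^d, Y ∈ {0,1}, S ∈ {0,1}, Z ∈ ℝ^{d_z}, and let g : ℝ^d → ℝ be measurable with g(X) integrable. Assume: (i) weak prior shift, i.e. g(X) is conditionally independent of S given Y; (ii) g(X) is conditionally independent of Z given (Y, S); (iii) P(S = 0) > 0 and P(Y = j, S = 1) > 0 for j ∈ {0,1}. Write μ_j = E[g(X) | Y = j, S = 1]. Then, under the conditional probability measure P(· | S = 0), almost surely E[g(X) | σ(Z)] = μ_0 + (μ_1 − μ_0) · P(Y = 1 | σ(Z)); consequently, if μ_1 ≠ μ_0, then under P(· | S = 0) almost surely P(Y = 1 | σ(Z)) = (E[g(X) | σ(Z)] − μ_0)/(μ_1 − μ_0). -/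

import Mathlib

open MeasureTheory ProbabilityTheory

/-- Conditional expectation of `f` given the event `A`: `(∫_A f dμ) / μ(A)`. -/
noncomputable def condMean {Ω : Type*} [MeasurableSpace Ω] (μ : Measure Ω)
    (f : Ω → ℝ) (A : Set Ω) : ℝ :=
  (∫ ω in A, f ω ∂μ) / (μ A).toReal

/-!
By weak prior shift, the mean of `g(X)` on `{Y = j, S = s}` is the class mean `E[g(X) | Y = j]`
whatever `s` is, so it equals `μ_j`; by the conditional independence of `g(X)` and `Z` given
`(Y, S)`, this stays true on `{Y = j, S = 0, Z ∈ C}`. Splitting according to `Y`, the integrals of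
`g(X)` and of `μ_Y` over every `σ(Z)`-measurable set agree in the target population, so the two
have the same conditional expectation given `σ(Z)`, and `μ_Y = μ_0 + (μ_1 - μ_0) 1{Y = 1}`.
-/

section General

variable {Ω : Type*} [mΩ : MeasurableSpace Ω]

lemma map_restrict_eq_smul_map_of_indep {ν : Measure Ω} {f : Ω → ℝ} {A : Set Ω}
    (hf : Measurable f) (h : ∀ B, MeasurableSet B → ν (f ⁻¹' B ∩ A) = ν (f ⁻¹' B) * ν A) :
    (ν.restrict A).map f = ν A • ν.map f := by
  ext B hB
  rw [Measure.map_apply hf hB, Measure.restrict_apply (hf hB), h B hB, Measure.smul_apply,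
    Measure.map_apply hf hB, smul_eq_mul, mul_comm]

lemma setIntegral_eq_measureReal_mul_integral_of_indep {ν : Measure Ω} {f : Ω → ℝ} {A : Set Ω}
    (hf : Measurable f) (h : ∀ B, MeasurableSet B → ν (f ⁻¹' B ∩ A) = ν (f ⁻¹' B) * ν A) :
    ∫ ω in A, f ω ∂ν = ν.real A * ∫ ω, f ω ∂ν := calc
  ∫ ω in A, f ω ∂ν = ∫ x, x ∂(ν.restrict A).map f :=
    (integral_map (f := fun x => x) hf.aemeasurable aestronglyMeasurable_id).symm
  _ = ν.real A * ∫ x, x ∂ν.map f := by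
    rw [map_restrict_eq_smul_map_of_indep hf h, integral_smul_measure, smul_eq_mul,
      measureReal_def]
  _ = ν.real A * ∫ ω, f ω ∂ν := by
    rw [integral_map (f := fun x => x) hf.aemeasurable aestronglyMeasurable_id]

variable {μ : Measure Ω} {f : Ω → ℝ} {D A : Set Ω}

lemma MeasureTheory.Integrable.cond (hf : Integrable f μ) (D : Set Ω) : Integrable f μ[|D] := by
  rcases eq_or_ne (μ D) 0 with hD | hD
  · rw [cond_eq_zero_of_meas_eq_zero hD]
    exact integrable_zero_measure
  · exact hf.restrict.smul_measure (ENNReal.inv_ne_top.mpr hD)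

lemma setIntegral_cond (hD : MeasurableSet D) (f : Ω → ℝ) (A : Set Ω) :
    ∫ ω in A, f ω ∂μ[|D] = (μ.real D)⁻¹ * ∫ ω in D ∩ A, f ω ∂μ := by
  rw [ProbabilityTheory.cond, Measure.restrict_smul, integral_smul_measure, ENNReal.toReal_inv,
    smul_eq_mul, Measure.restrict_restrict' hD, Set.inter_comm, measureReal_def]

lemma integral_cond_eq_condMean (f : Ω → ℝ) (D : Set Ω) : ∫ ω, f ω ∂μ[|D] = condMean μ f D := by
  rw [ProbabilityTheory.cond, integral_smul_measure, ENNReal.toReal_inv, smul_eq_mul, condMean,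
    inv_mul_eq_div]

lemma measureReal_cond (hD : MeasurableSet D) (A : Set Ω) :
    (μ[|D]).real A = (μ.real D)⁻¹ * μ.real (D ∩ A) := by
  rw [measureReal_def, cond_apply hD, ENNReal.toReal_mul, ENNReal.toReal_inv, measureReal_def,
    measureReal_def]

lemma setIntegral_inter_eq_measureReal_mul_condMean [IsFiniteMeasure μ] (hf : Measurable f)
    (hD : MeasurableSet D)
    (h : ∀ B, MeasurableSet B → μ[|D] (f ⁻¹' B ∩ A) = μ[|D] (f ⁻¹' B) * μ[|D] A) :
    ∫ ω in D ∩ A, f ω ∂μ = μ.real (D ∩ A) * condMean μ f D := by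
  rcases eq_or_ne (μ D) 0 with hD0 | hD0
  · have hDA : μ (D ∩ A) = 0 := measure_mono_null Set.inter_subset_left hD0
    rw [setIntegral_measure_zero _ hDA, measureReal_def, hDA, ENNReal.toReal_zero, zero_mul]
  have hDr : μ.real D ≠ 0 := (measureReal_ne_zero_iff (measure_ne_top μ D)).mpr hD0
  have key := setIntegral_eq_measureReal_mul_integral_of_indep hf h
  rw [setIntegral_cond hD, measureReal_cond hD, integral_cond_eq_condMean] at key
  field_simp at key
  linear_combination key

lemma condMean_inter_eq [IsFiniteMeasure μ] (hf : Measurable f) (hD : MeasurableSet D)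
    (hDA : μ (D ∩ A) ≠ 0)
    (h : ∀ B, MeasurableSet B → μ[|D] (f ⁻¹' B ∩ A) = μ[|D] (f ⁻¹' B) * μ[|D] A) :
    condMean μ f (D ∩ A) = condMean μ f D := by
  rw [condMean, setIntegral_inter_eq_measureReal_mul_condMean hf hD h, ← measureReal_def,
    mul_div_cancel_left₀ _ ((measureReal_ne_zero_iff (measure_ne_top μ _)).mpr hDA)]

lemma setIntegral_eq_sum_fiber {ι : Type*} [Fintype ι] [MeasurableSpace ι]
    [MeasurableSingletonClass ι] {Y : Ω → ι} (hY : Measurable Y) {T : Set Ω} (hT : MeasurableSet T)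
    (hf : ∀ j, IntegrableOn f (Y ⁻¹' {j} ∩ T) μ) :
    ∫ ω in T, f ω ∂μ = ∑ j, ∫ ω in Y ⁻¹' {j} ∩ T, f ω ∂μ := by
  rw [← integral_iUnion_fintype (fun j => (hY (measurableSet_singleton j)).inter hT)
    (fun i j hij => ((Set.disjoint_singleton.mpr hij).preimage Y).mono Set.inter_subset_left
      Set.inter_subset_left) hf,
    ← Set.iUnion_inter, ← Set.preimage_iUnion, Set.iUnion_of_singleton, Set.preimage_univ,
    Set.univ_inter]

lemma setIntegral_eq_setIntegral_comp_of_forall_fiber [IsFiniteMeasure μ] {ι : Type*} [Fintype ι]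
    [MeasurableSpace ι] [MeasurableSingletonClass ι] {Y : Ω → ι} (hY : Measurable Y) {T : Set Ω}
    (hT : MeasurableSet T) (hf : IntegrableOn f T μ) (a : ι → ℝ)
    (h : ∀ j, ∫ ω in Y ⁻¹' {j} ∩ T, f ω ∂μ = μ.real (Y ⁻¹' {j} ∩ T) * a j) :
    ∫ ω in T, f ω ∂μ = ∫ ω in T, a (Y ω) ∂μ := by
  have hfiber : ∀ j, Set.EqOn (fun ω => a (Y ω)) (fun _ => a j) (Y ⁻¹' {j} ∩ T) :=
    fun j ω hω => congrArg a hω.1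
  have hfiberm : ∀ j, MeasurableSet (Y ⁻¹' {j} ∩ T) :=
    fun j => (hY (measurableSet_singleton j)).inter hT
  have haY : ∀ j, IntegrableOn (fun ω => a (Y ω)) (Y ⁻¹' {j} ∩ T) μ :=
    fun j => (integrableOn_const (C := a j)).congr_fun (hfiber j).symm (hfiberm j)
  rw [setIntegral_eq_sum_fiber hY hT (fun j => hf.mono_set Set.inter_subset_right),
    setIntegral_eq_sum_fiber hY hT haY]
  refine Finset.sum_congr rfl fun j _ => ?_
  rw [h j, setIntegral_congr_fun (hfiberm j) (hfiber j), setIntegral_const, smul_eq_mul]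

lemma condExp_ae_eq_condExp_of_forall_setIntegral_eq {m : MeasurableSpace Ω} {g : Ω → ℝ}
    (hm : m ≤ mΩ) [SigmaFinite (μ.trim hm)] (hf : Integrable f μ)
    (hg : Integrable g μ)
    (h : ∀ s, MeasurableSet[m] s → μ s < ⊤ → ∫ ω in s, f ω ∂μ = ∫ ω in s, g ω ∂μ) :
    μ[f|m] =ᵐ[μ] μ[g|m] :=
  (ae_eq_condExp_of_forall_setIntegral_eq hm hf (fun _ _ _ => integrable_condExp.integrableOn)
    (fun s hs hμs => by rw [setIntegral_condExp hm hg hs, h s hs hμs])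
    stronglyMeasurable_condExp.aestronglyMeasurable).symm

lemma condExp_const_add_mul {m : MeasurableSpace Ω} (hm : m ≤ mΩ)
    [IsFiniteMeasure μ] (c k : ℝ) (hf : Integrable f μ) :
    μ[fun ω => c + k * f ω|m] =ᵐ[μ] fun ω => c + k * μ[f|m] ω := by
  have hsplit : (fun ω => c + k * f ω) = (fun _ => c) + k • f := rfl
  filter_upwards [hsplit ▸ condExp_add (integrable_const c) (hf.smul k) m, condExp_smul k f m]
    with ω hadd hsmul
  rw [hadd, Pi.add_apply, condExp_const hm, hsmul]
  rfl

end General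

section PriorShift

variable {Ω β : Type*} [MeasurableSpace Ω] [mβ : MeasurableSpace β]

def WeakPriorShift (μ : Measure Ω) (f : Ω → ℝ) (Y S : Ω → Bool) : Prop :=
  ∀ j : Bool, μ {ω | Y ω = j} ≠ 0 → ∀ (s : Bool) (B : Set ℝ), MeasurableSet B →
    μ[|{ω | Y ω = j}] ({ω | f ω ∈ B} ∩ {ω | S ω = s})
      = μ[|{ω | Y ω = j}] {ω | f ω ∈ B} * μ[|{ω | Y ω = j}] {ω | S ω = s}

def CondIndepGivenLabelAndSource (μ : Measure Ω) (f : Ω → ℝ) (Z : Ω → β) (Y S : Ω → Bool) :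
    Prop :=
  ∀ (j s : Bool), μ {ω | Y ω = j ∧ S ω = s} ≠ 0 →
    ∀ (B : Set ℝ) (C : Set β), MeasurableSet B → MeasurableSet C →
      μ[|{ω | Y ω = j ∧ S ω = s}] ({ω | f ω ∈ B} ∩ {ω | Z ω ∈ C})
        = μ[|{ω | Y ω = j ∧ S ω = s}] {ω | f ω ∈ B} * μ[|{ω | Y ω = j ∧ S ω = s}] {ω | Z ω ∈ C}

variable {μ : Measure Ω} [IsFiniteMeasure μ] {f : Ω → ℝ} {Y S : Ω → Bool} {Z : Ω → β}

lemma setIntegral_inter_preimage_eq_measureReal_mul_condMean (hf : Measurable f)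
    (hY : Measurable Y) (hS : Measurable S)
    (hwps : WeakPriorShift μ f Y S) (hciZ : CondIndepGivenLabelAndSource μ f Z Y S)
    {j : Bool} (hj : μ {ω | Y ω = j ∧ S ω = true} ≠ 0) {C : Set β} (hC : MeasurableSet C) :
    ∫ ω in {ω | Y ω = j ∧ S ω = false} ∩ Z ⁻¹' C, f ω ∂μ
      = μ.real ({ω | Y ω = j ∧ S ω = false} ∩ Z ⁻¹' C)
        * condMean μ f {ω | Y ω = j ∧ S ω = true} := by
  have hYj : MeasurableSet {ω | Y ω = j} := hY (measurableSet_singleton j)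
  rcases eq_or_ne (μ {ω | Y ω = j ∧ S ω = false}) 0 with h0 | h0
  · have hnull := measure_mono_null (Set.inter_subset_left (t := Z ⁻¹' C)) h0
    rw [setIntegral_measure_zero _ hnull, measureReal_def, hnull, ENNReal.toReal_zero, zero_mul]
  have hmean : ∀ s, μ {ω | Y ω = j ∧ S ω = s} ≠ 0 →
      condMean μ f {ω | Y ω = j ∧ S ω = s} = condMean μ f {ω | Y ω = j} := fun s hs =>
    condMean_inter_eq hf hYj hs
      (hwps j (fun h => hs (measure_mono_null Set.inter_subset_left h)) s)
  have hD : MeasurableSet {ω | Y ω = j ∧ S ω = false} :=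
    hYj.inter (hS (measurableSet_singleton false))
  rw [setIntegral_inter_eq_measureReal_mul_condMean (A := Z ⁻¹' C) hf hD
    (fun B hB => hciZ j false h0 B C hB hC), hmean false h0, hmean true hj]

lemma setIntegral_cond_preimage_eq_setIntegral_condMean (hf : Measurable f)
    (hfi : Integrable f μ) (hY : Measurable Y) (hS : Measurable S) (hZ : Measurable Z)
    (hwps : WeakPriorShift μ f Y S) (hciZ : CondIndepGivenLabelAndSource μ f Z Y S)
    (hpos : ∀ j, μ {ω | Y ω = j ∧ S ω = true} ≠ 0) {C : Set β} (hC : MeasurableSet C) :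
    ∫ ω in Z ⁻¹' C, f ω ∂μ[|{ω | S ω = false}]
      = ∫ ω in Z ⁻¹' C, condMean μ f {ω' | Y ω' = Y ω ∧ S ω' = true} ∂μ[|{ω | S ω = false}] := by
  have hS0 : MeasurableSet {ω | S ω = false} := hS (measurableSet_singleton false)
  rw [setIntegral_cond hS0, setIntegral_cond hS0]
  congr 1
  refine setIntegral_eq_setIntegral_comp_of_forall_fiber hY (hS0.inter (hZ hC)) hfi.integrableOn
    (fun j => condMean μ f {ω | Y ω = j ∧ S ω = true}) fun j => ?_
  rw [← Set.inter_assoc]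
  exact setIntegral_inter_preimage_eq_measureReal_mul_condMean hf hY hS hwps hciZ (hpos j) hC

theorem condExp_ae_eq_add_mul_condExp_label (hf : Measurable f)
    (hfi : Integrable f μ) (hY : Measurable Y) (hS : Measurable S) (hZ : Measurable Z)
    (hwps : WeakPriorShift μ f Y S) (hciZ : CondIndepGivenLabelAndSource μ f Z Y S)
    (hpos : ∀ j, μ {ω | Y ω = j ∧ S ω = true} ≠ 0) :
    μ[|{ω | S ω = false}][f|mβ.comap Z] =ᵐ[μ[|{ω | S ω = false}]] fun ω =>
      condMean μ f {ω | Y ω = false ∧ S ω = true}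
        + (condMean μ f {ω | Y ω = true ∧ S ω = true} - condMean μ f {ω | Y ω = false ∧ S ω = true})
          * μ[|{ω | S ω = false}][fun ω' => if Y ω' = true then (1 : ℝ) else 0|mβ.comap Z] ω := by
  set a : Bool → ℝ := fun j => condMean μ f {ω | Y ω = j ∧ S ω = true}
  have haY : a ∘ Y = fun ω => a false + (a true - a false) * if Y ω = true then 1 else 0 := by
    funext ω
    cases hω : Y ω <;> simp [hω]
  have hind : Integrable (fun ω => if Y ω = true then (1 : ℝ) else 0) μ[|{ω | S ω = false}] :=
    (Integrable.of_finite (f := fun j => if j = true then (1 : ℝ) else 0)).comp_measurable hY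
  refine (condExp_ae_eq_condExp_of_forall_setIntegral_eq hZ.comap_le (hfi.cond _)
    ((Integrable.of_finite (f := a)).comp_measurable hY) ?_).trans ?_
  · rintro _ ⟨C, hC, rfl⟩ -
    exact setIntegral_cond_preimage_eq_setIntegral_condMean hf hfi hY hS hZ hwps hciZ hpos hC
  · rw [haY]
    exact condExp_const_add_mul hZ.comap_le _ _ hind

end PriorShift

theorem stmt_11_general {Ω : Type*} [MeasurableSpace Ω] (μ : Measure Ω) [IsProbabilityMeasure μ]
    {d dz : ℕ} (X : Ω → (Fin d → ℝ)) (Y S : Ω → Bool) (Z : Ω → (Fin dz → ℝ))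
    (g : (Fin d → ℝ) → ℝ)
    (hX : Measurable X) (hY : Measurable Y) (hS : Measurable S) (hZ : Measurable Z)
    (hg : Measurable g)
    (hint : Integrable (fun ω => g (X ω)) μ)
    -- (i) weak prior shift: `g(X)` is conditionally independent of `S` given `Y`
    (hwps : ∀ j : Bool, μ {ω | Y ω = j} ≠ 0 → ∀ (s : Bool) (B : Set ℝ),
      MeasurableSet B →
        μ[|{ω | Y ω = j}] ({ω | g (X ω) ∈ B} ∩ {ω | S ω = s})
          = μ[|{ω | Y ω = j}] {ω | g (X ω) ∈ B} * μ[|{ω | Y ω = j}] {ω | S ω = s})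
    -- (ii) `g(X)` is conditionally independent of `Z` given `(Y, S)`
    (hciZ : ∀ (j s : Bool), μ {ω | Y ω = j ∧ S ω = s} ≠ 0 →
      ∀ (B : Set ℝ) (C : Set (Fin dz → ℝ)), MeasurableSet B → MeasurableSet C →
        μ[|{ω | Y ω = j ∧ S ω = s}] ({ω | g (X ω) ∈ B} ∩ {ω | Z ω ∈ C})
          = μ[|{ω | Y ω = j ∧ S ω = s}] {ω | g (X ω) ∈ B}
            * μ[|{ω | Y ω = j ∧ S ω = s}] {ω | Z ω ∈ C})
    -- (iii) positivity
    (hY0S1 : μ {ω | Y ω = false ∧ S ω = true} ≠ 0)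
    (hY1S1 : μ {ω | Y ω = true ∧ S ω = true} ≠ 0) :
    let μtg : Measure Ω := μ[|{ω | S ω = false}]
    let a0 : ℝ := condMean μ (fun ω => g (X ω)) {ω | Y ω = false ∧ S ω = true}
    let a1 : ℝ := condMean μ (fun ω => g (X ω)) {ω | Y ω = true ∧ S ω = true}
    let mZ : MeasurableSpace Ω := MeasurableSpace.comap Z inferInstance
    (MeasureTheory.condExp mZ μtg (fun ω => g (X ω))
        =ᵐ[μtg] fun ω =>
          a0 + (a1 - a0)
            * MeasureTheory.condExp mZ μtg (fun ω' => if Y ω' = true then (1 : ℝ) else 0) ω) ∧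
      (a1 ≠ a0 →
        MeasureTheory.condExp mZ μtg (fun ω' => if Y ω' = true then (1 : ℝ) else 0)
          =ᵐ[μtg] fun ω =>
            (MeasureTheory.condExp mZ μtg (fun ω' => g (X ω')) ω - a0) / (a1 - a0)) := by
  have hmean := condExp_ae_eq_add_mul_condExp_label (f := fun ω => g (X ω)) (hg.comp hX) hint
    hY hS hZ hwps hciZ (Bool.forall_bool.mpr ⟨hY0S1, hY1S1⟩)
  intro μtg a0 a1 mZ
  refine ⟨hmean, fun hne => ?_⟩
  filter_upwards [hmean] with ω hω
  rw [hω, add_sub_cancel_left, mul_div_cancel_left₀ _ (sub_ne_zero_of_ne hne)]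

/-- under weak prior shift and conditional independence of
`g(X)` and `Z` given `(Y, S)`, in the target population (`S = 0`) one has
`E[g(X) | σ(Z)] = μ₀ + (μ₁ - μ₀) P(Y = 1 | σ(Z))` a.s., and hence, when
`μ₁ ≠ μ₀`, `P(Y = 1 | σ(Z)) = (E[g(X) | σ(Z)] - μ₀)/(μ₁ - μ₀)` a.s. -/
theorem stmt_11 {Ω : Type*} [MeasurableSpace Ω] (μ : Measure Ω) [IsProbabilityMeasure μ]
    {d dz : ℕ} (X : Ω → (Fin d → ℝ)) (Y S : Ω → Bool) (Z : Ω → (Fin dz → ℝ))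
    (g : (Fin d → ℝ) → ℝ)
    (hX : Measurable X) (hY : Measurable Y) (hS : Measurable S) (hZ : Measurable Z)
    (hg : Measurable g)
    (hint : Integrable (fun ω => g (X ω)) μ)
    -- (i) weak prior shift: `g(X)` is conditionally independent of `S` given `Y`
    (hwps : ∀ j : Bool, μ {ω | Y ω = j} ≠ 0 → ∀ (s : Bool) (B : Set ℝ),
      MeasurableSet B →
        μ[|{ω | Y ω = j}] ({ω | g (X ω) ∈ B} ∩ {ω | S ω = s})
          = μ[|{ω | Y ω = j}] {ω | g (X ω) ∈ B} * μ[|{ω | Y ω = j}] {ω | S ω = s})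
    -- (ii) `g(X)` is conditionally independent of `Z` given `(Y, S)`
    (hciZ : ∀ (j s : Bool), μ {ω | Y ω = j ∧ S ω = s} ≠ 0 →
      ∀ (B : Set ℝ) (C : Set (Fin dz → ℝ)), MeasurableSet B → MeasurableSet C →
        μ[|{ω | Y ω = j ∧ S ω = s}] ({ω | g (X ω) ∈ B} ∩ {ω | Z ω ∈ C})
          = μ[|{ω | Y ω = j ∧ S ω = s}] {ω | g (X ω) ∈ B}
            * μ[|{ω | Y ω = j ∧ S ω = s}] {ω | Z ω ∈ C})
    -- (iii) positivity
    (hS0 : μ {ω | S ω = false} ≠ 0)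
    (hY0S1 : μ {ω | Y ω = false ∧ S ω = true} ≠ 0)
    (hY1S1 : μ {ω | Y ω = true ∧ S ω = true} ≠ 0) :
    let μtg : Measure Ω := μ[|{ω | S ω = false}]
    let a0 : ℝ := condMean μ (fun ω => g (X ω)) {ω | Y ω = false ∧ S ω = true}
    let a1 : ℝ := condMean μ (fun ω => g (X ω)) {ω | Y ω = true ∧ S ω = true}
    let mZ : MeasurableSpace Ω := MeasurableSpace.comap Z inferInstance
    (MeasureTheory.condExp mZ μtg (fun ω => g (X ω))
        =ᵐ[μtg] fun ω =>
          a0 + (a1 - a0)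
            * MeasureTheory.condExp mZ μtg (fun ω' => if Y ω' = true then (1 : ℝ) else 0) ω) ∧
      (a1 ≠ a0 →
        MeasureTheory.condExp mZ μtg (fun ω' => if Y ω' = true then (1 : ℝ) else 0)
          =ᵐ[μtg] fun ω =>
            (MeasureTheory.condExp mZ μtg (fun ω' => g (X ω')) ω - a0) / (a1 - a0)) :=
  stmt_11_general μ X Y S Z g hX hY hS hZ hg hint hwps hciZ hY0S1 hY1S1
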